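/- arXiv:math/0112039 — 7 statements merged into one kernel-verified Lean document; each statement's English description precedes it below -/
import Mathlib

section
/- Let p be a positive integer, let n_1,…,n_p be positive integers, and let α_1,…,α_p > 0 satisfy Σ_{i=1}^p α_i = 1. For every r with 0 < r < 1 there exists k_0 ∈ ℕ such that for every integer k > k_0 there exist nonnegative integers l_1,…,l_p with Σ_{i=1}^p l_i n_i ≤ k such that, setting l_{p+1} = k − Σ_{i=1}^p l_i n_i, one has: (i) Σ_{i=1}^p |l_i n_i/k − α_i| + l_{p+1}/k < r², and (ii) k²·(1 − r − Σ_{i=1}^p α_i²/n_i²) < k² − Σ_{i=1}^{p+1} l_i² < k²·(1 + r − Σ_{i=1}^p α_i²/n_i²). -/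
/-!
Take `l_i = ⌊α_i k / n_i⌋`. Then `0 ≤ α_i k - l_i n_i < n_i`, so the remainder
`l_{p+1} = Σ (α_i k - l_i n_i)` and every error `|l_i n_i - α_i k|` is bounded by
`N = Σ n_i`, independently of `k`; this gives (i) once `2N/k < r²`. Writing
`x_i = α_i k / n_i`, we have `x_i² - 2x_i ≤ l_i² ≤ x_i²` with `Σ x_i² = k² Σ α_i²/n_i²`
and `Σ x_i ≤ k`, so `k² - Σ l_i²` differs from `k²(1 - Σ α_i²/n_i²)` by at most `2k + N²`,
which is `o(k²)`; this gives (ii).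
-/

open Finset Filter

lemma sq_sub_two_mul_le_floor_sq {x : ℝ} (hx : 0 ≤ x) : x ^ 2 - 2 * x ≤ (⌊x⌋₊ : ℝ) ^ 2 := by
  have hlt := Nat.lt_floor_add_one x
  have hle := Nat.floor_le hx
  nlinarith

lemma eventually_const_div_natCast_lt (C : ℝ) {ε : ℝ} (hε : 0 < ε) :
    ∀ᶠ k : ℕ in atTop, C / k < ε :=
  (tendsto_order.1 (tendsto_const_div_atTop_nhds_zero_nat C)).2 ε hε

section BlockMultiplicities

variable {ι : Type*} {n : ι → ℕ} {α : ι → ℝ}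

/-- The multiplicity `l_i` of the `i`-th summand `M_{n_i}` in the block-diagonal embedding
into `M_k`: as many copies as fit into `α_i k` rows. -/
noncomputable def blockMult (α : ι → ℝ) (n : ι → ℕ) (k : ℕ) (i : ι) : ℕ :=
  ⌊α i * k / n i⌋₊

lemma blockMult_mul_le {i : ι} (hα : 0 ≤ α i) (hn : 0 < n i) (k : ℕ) :
    (blockMult α n k i : ℝ) * n i ≤ α i * k := by
  rw [← le_div_iff₀ (by exact_mod_cast hn)]
  exact Nat.floor_le (by positivity)

lemma sub_lt_blockMult_mul {i : ι} (hn : 0 < n i) (k : ℕ) :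
    α i * k - n i < (blockMult α n k i : ℝ) * n i := by
  have h := Nat.lt_floor_add_one (α i * k / n i)
  rw [div_lt_iff₀ (by exact_mod_cast hn)] at h
  rw [blockMult]
  linarith

variable [Fintype ι]

lemma sum_blockMult_mul_le (hα : ∀ i, 0 ≤ α i) (hn : ∀ i, 0 < n i) (hαsum : ∑ i, α i = 1)
    (k : ℕ) : ∑ i, blockMult α n k i * n i ≤ k := by
  have h : ∑ i, (blockMult α n k i : ℝ) * n i ≤ k :=
    calc ∑ i, (blockMult α n k i : ℝ) * n i ≤ ∑ i, α i * k :=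
          sum_le_sum fun i _ ↦ blockMult_mul_le (hα i) (hn i) k
      _ = k := by rw [← sum_mul, hαsum, one_mul]
  exact_mod_cast h

lemma cast_sub_sum_blockMult_mul (hα : ∀ i, 0 ≤ α i) (hn : ∀ i, 0 < n i)
    (hαsum : ∑ i, α i = 1) (k : ℕ) :
    ((k - ∑ i, blockMult α n k i * n i : ℕ) : ℝ)
      = ∑ i, (α i * k - (blockMult α n k i : ℝ) * n i) := by
  rw [Nat.cast_sub (sum_blockMult_mul_le hα hn hαsum k), sum_sub_distrib, ← sum_mul, hαsum]
  push_cast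
  ring

lemma cast_sub_sum_blockMult_mul_le (hα : ∀ i, 0 ≤ α i) (hn : ∀ i, 0 < n i)
    (hαsum : ∑ i, α i = 1) (k : ℕ) :
    ((k - ∑ i, blockMult α n k i * n i : ℕ) : ℝ) ≤ ∑ i, (n i : ℝ) := by
  rw [cast_sub_sum_blockMult_mul hα hn hαsum]
  exact sum_le_sum fun i _ ↦ by linarith [sub_lt_blockMult_mul (α := α) (hn i) k]

lemma sum_abs_blockMult_mul_div_sub_le (hα : ∀ i, 0 ≤ α i) (hn : ∀ i, 0 < n i)
    {k : ℕ} (hk : 0 < k) :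
    ∑ i, |((blockMult α n k i * n i : ℕ) : ℝ) / k - α i| ≤ (∑ i, (n i : ℝ)) / k := by
  have hk' : (0 : ℝ) < k := by exact_mod_cast hk
  rw [sum_div]
  refine sum_le_sum fun i _ ↦ ?_
  have hdiff : ((blockMult α n k i * n i : ℕ) : ℝ) / k - α i
      = ((blockMult α n k i : ℝ) * n i - α i * k) / k := by
    push_cast
    field_simp
  rw [hdiff, abs_div, abs_of_pos hk']
  gcongr
  rw [abs_le]
  constructor <;> linarith [blockMult_mul_le (hα i) (hn i) k, sub_lt_blockMult_mul (α := α) (hn i) k]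

lemma sum_sq_div_mul_natCast (k : ℕ) :
    ∑ i, (α i * k / n i) ^ 2 = (k : ℝ) ^ 2 * ∑ i, α i ^ 2 / (n i : ℝ) ^ 2 := by
  rw [mul_sum]
  exact sum_congr rfl fun i _ ↦ by ring

lemma sum_sq_blockMult_le (hα : ∀ i, 0 ≤ α i) (k : ℕ) :
    ∑ i, (blockMult α n k i : ℝ) ^ 2 ≤ (k : ℝ) ^ 2 * ∑ i, α i ^ 2 / (n i : ℝ) ^ 2 := by
  rw [← sum_sq_div_mul_natCast]
  refine sum_le_sum fun i _ ↦ pow_le_pow_left₀ (Nat.cast_nonneg _) (Nat.floor_le ?_) 2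
  have := hα i
  positivity

lemma le_sum_sq_blockMult (hα : ∀ i, 0 ≤ α i) (hn : ∀ i, 0 < n i) (hαsum : ∑ i, α i = 1)
    (k : ℕ) :
    (k : ℝ) ^ 2 * ∑ i, α i ^ 2 / (n i : ℝ) ^ 2 - 2 * k ≤ ∑ i, (blockMult α n k i : ℝ) ^ 2 := by
  have hsum : ∑ i, α i * k / n i ≤ k :=
    calc ∑ i, α i * k / n i ≤ ∑ i, α i * k :=
          sum_le_sum fun i _ ↦ div_le_self (by have := hα i; positivity)
            (by exact_mod_cast hn i)
      _ = k := by rw [← sum_mul, hαsum, one_mul]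
  calc (k : ℝ) ^ 2 * ∑ i, α i ^ 2 / (n i : ℝ) ^ 2 - 2 * k
      ≤ ∑ i, ((α i * k / n i) ^ 2 - 2 * (α i * k / n i)) := by
        rw [sum_sub_distrib, sum_sq_div_mul_natCast, ← mul_sum]
        linarith
    _ ≤ ∑ i, (blockMult α n k i : ℝ) ^ 2 :=
        sum_le_sum fun i _ ↦ sq_sub_two_mul_le_floor_sq (by have := hα i; positivity)

lemma sum_abs_blockMult_mul_div_sub_add_lt (hα : ∀ i, 0 ≤ α i) (hn : ∀ i, 0 < n i)
    (hαsum : ∑ i, α i = 1) {k : ℕ} (hk : 0 < k) {ε : ℝ} (hε : 2 * (∑ i, (n i : ℝ)) / k < ε) :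
    ∑ i, |((blockMult α n k i * n i : ℕ) : ℝ) / k - α i|
      + ((k - ∑ i, blockMult α n k i * n i : ℕ) : ℝ) / k < ε := by
  have hrem : ((k - ∑ i, blockMult α n k i * n i : ℕ) : ℝ) / k ≤ (∑ i, (n i : ℝ)) / k :=
    div_le_div_of_nonneg_right (cast_sub_sum_blockMult_mul_le hα hn hαsum k) k.cast_nonneg
  rw [mul_div_assoc] at hε
  linarith [sum_abs_blockMult_mul_div_sub_le hα hn hk (α := α)]

lemma mul_one_sub_sub_lt_sq_sub_sum_sq_blockMult (hα : ∀ i, 0 ≤ α i) (hn : ∀ i, 0 < n i)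
    (hαsum : ∑ i, α i = 1) {k : ℕ} (hk : 0 < k) {r : ℝ} (hr : (∑ i, (n i : ℝ)) ^ 2 / k < r) :
    (k : ℝ) ^ 2 * (1 - r - ∑ i, α i ^ 2 / (n i : ℝ) ^ 2)
      < (k : ℝ) ^ 2 - (∑ i, (blockMult α n k i : ℝ) ^ 2
        + ((k - ∑ i, blockMult α n k i * n i : ℕ) : ℝ) ^ 2) := by
  have hk' : (1 : ℝ) ≤ k := by exact_mod_cast hk
  have hrem : ((k - ∑ i, blockMult α n k i * n i : ℕ) : ℝ) ^ 2 ≤ (∑ i, (n i : ℝ)) ^ 2 :=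
    pow_le_pow_left₀ (Nat.cast_nonneg _) (cast_sub_sum_blockMult_mul_le hα hn hαsum k) 2
  rw [div_lt_iff₀ (by positivity)] at hr
  nlinarith [sum_sq_blockMult_le (n := n) hα k]

lemma sq_sub_sum_sq_blockMult_lt_mul_one_add_sub (hα : ∀ i, 0 ≤ α i) (hn : ∀ i, 0 < n i)
    (hαsum : ∑ i, α i = 1) {k : ℕ} (hk : 0 < k) {r : ℝ} (hr : 2 / k < r) :
    (k : ℝ) ^ 2 - (∑ i, (blockMult α n k i : ℝ) ^ 2
        + ((k - ∑ i, blockMult α n k i * n i : ℕ) : ℝ) ^ 2)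
      < (k : ℝ) ^ 2 * (1 + r - ∑ i, α i ^ 2 / (n i : ℝ) ^ 2) := by
  have hk' : (0 : ℝ) < k := by exact_mod_cast hk
  rw [div_lt_iff₀ hk'] at hr
  nlinarith [le_sum_sq_blockMult hα hn hαsum k,
    sq_nonneg ((k - ∑ i, blockMult α n k i * n i : ℕ) : ℝ)]

end BlockMultiplicities

theorem stmt_3_general (p : ℕ) (n : Fin p → ℕ) (hn : ∀ i, 0 < n i)
    (α : Fin p → ℝ) (hα : ∀ i, 0 < α i) (hαsum : ∑ i, α i = 1)
    (r : ℝ) (hr0 : 0 < r) :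
    ∃ k₀ : ℕ, ∀ k : ℕ, k₀ < k →
      ∃ l : Fin p → ℕ, (∑ i, l i * n i) ≤ k ∧
        ((∑ i, |((l i * n i : ℕ) : ℝ) / k - α i|)
            + ((k - ∑ i, l i * n i : ℕ) : ℝ) / k < r ^ 2) ∧
        ((k : ℝ) ^ 2 * (1 - r - ∑ i, (α i) ^ 2 / (n i : ℝ) ^ 2)
            < (k : ℝ) ^ 2 - ((∑ i, ((l i : ℝ)) ^ 2)
                + (((k - ∑ i, l i * n i : ℕ) : ℝ)) ^ 2)) ∧
        ((k : ℝ) ^ 2 - ((∑ i, ((l i : ℝ)) ^ 2)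
              + (((k - ∑ i, l i * n i : ℕ) : ℝ)) ^ 2)
            < (k : ℝ) ^ 2 * (1 + r - ∑ i, (α i) ^ 2 / (n i : ℝ) ^ 2)) := by
  have hα' i := (hα i).le
  set N : ℝ := ∑ i, (n i : ℝ)
  obtain ⟨k₀, hk₀⟩ := ((eventually_gt_atTop 0).and <|
    (eventually_const_div_natCast_lt (2 * N) (pow_pos hr0 2)).and <|
    (eventually_const_div_natCast_lt 2 hr0).and
    (eventually_const_div_natCast_lt (N ^ 2) hr0)).exists_forall_of_atTop
  refine ⟨k₀, fun k hk ↦ ?_⟩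
  obtain ⟨hk, htrace, htwo, hNsq⟩ := hk₀ k hk.le
  exact ⟨blockMult α n k, sum_blockMult_mul_le hα' hn hαsum k,
    sum_abs_blockMult_mul_div_sub_add_lt hα' hn hαsum hk htrace,
    mul_one_sub_sub_lt_sq_sub_sum_sq_blockMult hα' hn hαsum hk hNsq,
    sq_sub_sum_sq_blockMult_lt_mul_one_add_sub hα' hn hαsum hk htwo⟩

/-- arithmetic content of Lemma 3.6: for `0 < r < 1` there is
`k₀` such that each `k > k₀` admits multiplicities `l_1,…,l_p` (with remainder
`l_{p+1} = k − Σ l_i n_i`) for which the induced trace is `r²`-close to the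
weights `α_i` and `k² − Σ_{i=1}^{p+1} l_i²` is within `r·k²` of
`k²(1 − Σ α_i²/n_i²)`. -/
theorem stmt_3 (p : ℕ) (hp : 0 < p) (n : Fin p → ℕ) (hn : ∀ i, 0 < n i)
    (α : Fin p → ℝ) (hα : ∀ i, 0 < α i) (hαsum : ∑ i, α i = 1)
    (r : ℝ) (hr0 : 0 < r) (hr1 : r < 1) :
    ∃ k₀ : ℕ, ∀ k : ℕ, k₀ < k →
      ∃ l : Fin p → ℕ, (∑ i, l i * n i) ≤ k ∧
        ((∑ i, |((l i * n i : ℕ) : ℝ) / k - α i|)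
            + ((k - ∑ i, l i * n i : ℕ) : ℝ) / k < r ^ 2) ∧
        ((k : ℝ) ^ 2 * (1 - r - ∑ i, (α i) ^ 2 / (n i : ℝ) ^ 2)
            < (k : ℝ) ^ 2 - ((∑ i, ((l i : ℝ)) ^ 2)
                + (((k - ∑ i, l i * n i : ℕ) : ℝ)) ^ 2)) ∧
        ((k : ℝ) ^ 2 - ((∑ i, ((l i : ℝ)) ^ 2)
              + (((k - ∑ i, l i * n i : ℕ) : ℝ)) ^ 2)
            < (k : ℝ) ^ 2 * (1 + r - ∑ i, (α i) ^ 2 / (n i : ℝ) ^ 2)) :=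
  stmt_3_general p n hn α hα hαsum r hr0
end

section
/- Let d, s be positive integers, let Λ_{ij} ∈ ℕ for 1 ≤ i ≤ d and 1 ≤ j ≤ s, let p_1,…,p_d and q_1,…,q_s be positive integers, and let r_1,…,r_s be positive real numbers. Assume that Σ_{i=1}^d Λ_{ij}·p_i = q_j for every j (the unital inclusion condition for the inclusion matrix Λ). Then Σ_{i=1}^d (1/p_i²)·(Σ_{j=1}^s Λ_{ij} p_i r_j / q_j)² ≥ Σ_{j=1}^s r_j²/q_j². -/
/-! Put `x_j = r_j / q_j ≥ 0`; the `i`-th summand on the right is then `(Σ_j Λ_{ij} x_j)²`.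
Expanding the square and dropping the (nonnegative) cross terms leaves `Σ_j (Σ_i Λ_{ij}²) x_j²`,
and `Σ_i Λ_{ij}² ≥ 1` because `Σ_i Λ_{ij} p_i = q_j > 0` forces some `Λ_{ij} ≥ 1`. -/

open Finset

theorem sum_sq_le_sum_sq_sum_mul {ι κ : Type*} [Fintype ι] [Fintype κ]
    (Λ : ι → κ → ℝ) (x : κ → ℝ) (hΛ : ∀ i j, 0 ≤ Λ i j) (hx : ∀ j, 0 ≤ x j)
    (hcover : ∀ j, ∃ i, 1 ≤ Λ i j) :
    ∑ j, x j ^ 2 ≤ ∑ i, (∑ j, Λ i j * x j) ^ 2 := by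
  calc ∑ j, x j ^ 2
      ≤ ∑ j, ∑ i, (Λ i j * x j) ^ 2 := by
        refine sum_le_sum fun j _ => ?_
        obtain ⟨i, hi⟩ := hcover j
        calc x j ^ 2 ≤ (Λ i j * x j) ^ 2 :=
              pow_le_pow_left₀ (hx j) (le_mul_of_one_le_left (hx j) hi) 2
          _ ≤ ∑ i, (Λ i j * x j) ^ 2 :=
              single_le_sum (f := fun i => (Λ i j * x j) ^ 2) (fun _ _ => sq_nonneg _)
                (mem_univ i)
    _ = ∑ i, ∑ j, (Λ i j * x j) ^ 2 := sum_comm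
    _ ≤ ∑ i, (∑ j, Λ i j * x j) ^ 2 :=
        sum_le_sum fun i _ =>
          sum_sq_le_sq_sum_of_nonneg fun j _ => mul_nonneg (hΛ i j) (hx j)

theorem exists_one_le_of_sum_mul_eq_pos {ι : Type*} [Fintype ι] {Λ P : ι → ℕ} {q : ℕ}
    (hq : 0 < q) (hincl : ∑ i, Λ i * P i = q) : ∃ i, 1 ≤ Λ i := by
  obtain ⟨i, -, hi⟩ := exists_ne_zero_of_sum_ne_zero (hincl ▸ hq.ne')
  exact ⟨i, Nat.one_le_iff_ne_zero.mpr (left_ne_zero_of_mul hi)⟩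

theorem one_div_sq_mul_sq_sum_mul_mul {κ : Type*} [Fintype κ] {c : ℝ} (hc : c ≠ 0)
    (a b e : κ → ℝ) :
    1 / c ^ 2 * (∑ j, a j * c * b j / e j) ^ 2 = (∑ j, a j * (b j / e j)) ^ 2 := by
  have hfactor : ∑ j, a j * c * b j / e j = c * ∑ j, a j * (b j / e j) := by
    rw [mul_sum]
    exact sum_congr rfl fun j _ => by ring
  rw [hfactor, mul_pow]
  field_simp

theorem stmt_5_general (d s : ℕ)
    (Λ : Fin d → Fin s → ℕ)
    (P : Fin d → ℕ) (q : Fin s → ℕ) (hP : ∀ i, 0 < P i) (hq : ∀ j, 0 < q j)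
    (r : Fin s → ℝ) (hr : ∀ j, 0 < r j)
    (hincl : ∀ j, ∑ i, Λ i j * P i = q j) :
    ∑ j, (r j) ^ 2 / (q j : ℝ) ^ 2 ≤
      ∑ i, (1 / (P i : ℝ) ^ 2) *
        (∑ j, (Λ i j : ℝ) * (P i : ℝ) * r j / (q j : ℝ)) ^ 2 := by
  have hcover : ∀ j, ∃ i, 1 ≤ (Λ i j : ℝ) := fun j =>
    (exists_one_le_of_sum_mul_eq_pos (hq j) (hincl j)).imp fun _ h => Nat.one_le_cast.mpr h
  simp_rw [one_div_sq_mul_sq_sum_mul_mul (Nat.cast_ne_zero.mpr (hP _).ne'), ← div_pow]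
  exact sum_sq_le_sum_sq_sum_mul _ _ (fun _ _ => Nat.cast_nonneg _)
    (fun j => div_nonneg (hr j).le (Nat.cast_nonneg _)) hcover

/-- numerical core of Lemma 3.8: if `Λ` is the inclusion
matrix of a unital inclusion (so `Σ_i Λ_{ij} p_i = q_j`), then
`Σ_i (1/p_i²)(Σ_j Λ_{ij} p_i r_j/q_j)² ≥ Σ_j r_j²/q_j²`. -/
theorem stmt_5 (d s : ℕ) (hd : 0 < d) (hs : 0 < s)
    (Λ : Fin d → Fin s → ℕ)
    (P : Fin d → ℕ) (q : Fin s → ℕ) (hP : ∀ i, 0 < P i) (hq : ∀ j, 0 < q j)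
    (r : Fin s → ℝ) (hr : ∀ j, 0 < r j)
    (hincl : ∀ j, ∑ i, Λ i j * P i = q j) :
    ∑ j, (r j) ^ 2 / (q j : ℝ) ^ 2 ≤
      ∑ i, (1 / (P i : ℝ) ^ 2) *
        (∑ j, (Λ i j : ℝ) * (P i : ℝ) * r j / (q j : ℝ)) ^ 2 :=
  stmt_5_general d s Λ P q hP hq r hr hincl
end

section
/- Let p be a positive integer and let n_1,…,n_p be positive integers. Then there exists an element x of the C*-algebra M = M_{n_1}(ℂ) ⊕ ⋯ ⊕ M_{n_p}(ℂ) such that the unital *-subalgebra of M generated by x is all of M. -/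
/-- The finite-dimensional C*-algebra `M = M_{n_1}(ℂ) ⊕ ⋯ ⊕ M_{n_p}(ℂ)`. -/
abbrev NA {p : ℕ} (n : Fin p → ℕ) := ∀ j : Fin p, Matrix (Fin (n j)) (Fin (n j)) ℂ

/-!
Take `x = ∑ₖ cₖ E_{k,k+1}` in every block, indices taken mod `n_j`, with nonzero weights whose
moduli are pairwise distinct across all blocks. Then `x xᴴ` is diagonal with pairwise distinct
entries `|cₖ|²`, so Lagrange interpolation polynomials in `x xᴴ` produce every diagonal matrix
unit `E_kk` of every block. Compressing gives `E_kk x E_{k+1,k+1} = cₖ E_{k,k+1}`, and products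
of these cyclically consecutive units are all the matrix units `E_kl`, which span `M`.
-/

open Matrix Polynomial

theorem Pi.adjoin_singleton_eq_top_of_injective {K ι : Type*} [Field K] [Fintype ι]
    [DecidableEq ι] {v : ι → K} (hv : Function.Injective v) : Algebra.adjoin K {v} = ⊤ := by
  refine eq_top_iff.2 fun f _ => ?_
  have hf : aeval v (Lagrange.interpolate Finset.univ v f) = f := by
    funext i
    rw [aeval_fn_apply, coe_aeval_eq_eval]
    exact Lagrange.eval_interpolate_at_node f hv.injOn (Finset.mem_univ i)
  exact hf ▸ aeval_mem_adjoin_singleton K v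

namespace Matrix

section PiDiagonal

variable {ι : Type*} {m : ι → Type*} [∀ i, Fintype (m i)] [∀ i, DecidableEq (m i)]
  (R : Type*) [CommSemiring R]

def piDiagonalAlgHom : ((Σ i, m i) → R) →ₐ[R] ∀ i, Matrix (m i) (m i) R :=
  AlgHom.pi fun i =>
    (diagonalAlgHom R).comp (AlgHom.pi fun k => Pi.evalAlgHom R _ ⟨i, k⟩)

theorem piDiagonalAlgHom_apply (f : (Σ i, m i) → R) (i : ι) :
    piDiagonalAlgHom R f i = diagonal fun k => f ⟨i, k⟩ :=
  rfl

theorem piDiagonalAlgHom_single [DecidableEq ι] (i : ι) (k : m i) :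
    piDiagonalAlgHom R (Pi.single ⟨i, k⟩ 1) = Pi.single i (single k k 1) := by
  funext j
  rw [piDiagonalAlgHom_apply]
  by_cases hj : j = i
  · subst hj
    rw [Pi.single_eq_same, ← diagonal_single]
    congr 1
    funext k'
    simp [Pi.single_apply]
  · simp [hj]

end PiDiagonal

theorem pi_single_single_mem_of_piDiagonalAlgHom_mem {K ι : Type*} [Field K] [Fintype ι]
    [DecidableEq ι] {m : ι → Type*} [∀ i, Fintype (m i)] [∀ i, DecidableEq (m i)]
    (S : Subalgebra K (∀ i, Matrix (m i) (m i) K)) {v : (Σ i, m i) → K}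
    (hv : Function.Injective v) (hS : piDiagonalAlgHom K v ∈ S) (i : ι) (k : m i) :
    Pi.single i (single k k 1) ∈ S := by
  have hle : (⊤ : Subalgebra K _).map (piDiagonalAlgHom K) ≤ S := by
    rw [← Pi.adjoin_singleton_eq_top_of_injective hv, AlgHom.map_adjoin, Set.image_singleton]
    exact Algebra.adjoin_le (Set.singleton_subset_iff.2 hS)
  exact piDiagonalAlgHom_single K i k ▸ hle ⟨_, Algebra.mem_top, rfl⟩

section WeightedShift

variable {R : Type*} {m : ℕ} [NeZero m]

def weightedShift [Zero R] (c : Fin m → R) : Matrix (Fin m) (Fin m) R :=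
  of fun k l => if l = k + 1 then c k else 0

theorem weightedShift_apply_add_one [Zero R] (c : Fin m → R) (k : Fin m) :
    weightedShift c k (k + 1) = c k := by
  simp [weightedShift]

theorem weightedShift_mul_conjTranspose [NonUnitalSemiring R] [StarRing R] (c : Fin m → R) :
    weightedShift c * (weightedShift c)ᴴ = diagonal fun k => c k * star (c k) := by
  ext k l
  by_cases h : k = l
  · subst h; simp [weightedShift, mul_apply]
  · simp [weightedShift, mul_apply, h]

end WeightedShift

theorem pi_single_single_add_one_mem {K ι : Type*} [Field K] [DecidableEq ι] {m : ι → ℕ}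
    [∀ i, NeZero (m i)] (S : Subalgebra K (∀ i, Matrix (Fin (m i)) (Fin (m i)) K))
    {c : ∀ i, Fin (m i) → K} (hc : ∀ i k, c i k ≠ 0)
    (hx : (fun i => weightedShift (c i)) ∈ S)
    (hdiag : ∀ i (k : Fin (m i)), Pi.single i (single k k 1) ∈ S) (i : ι) (k : Fin (m i)) :
    Pi.single i (single k (k + 1) 1) ∈ S := by
  have hmem : Pi.single i (single k (k + 1) (c i k)) ∈ S := by
    simpa [← Pi.single_mul_left, ← Pi.single_mul, weightedShift_apply_add_one] using
      mul_mem (mul_mem (hdiag i k) hx) (hdiag i (k + 1))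
  simpa [← Pi.single_smul, smul_single, inv_mul_cancel₀ (hc i k)] using
    Subalgebra.smul_mem S hmem (c i k)⁻¹

open Fin.NatCast in
theorem map_single_mem_of_forall_map_single_add_one_mem {R A S : Type*} [Semiring R] [Mul A]
    [SetLike S A] [MulMemClass S A] {m : ℕ} [NeZero m] (f : Matrix (Fin m) (Fin m) R →ₙ* A)
    (T : S) (h : ∀ k, f (single k (k + 1) 1) ∈ T) (k l : Fin m) : f (single k l 1) ∈ T := by
  have hchain : ∀ d : ℕ, ∀ k : Fin m, f (single k (k + (d + 1 : ℕ)) 1) ∈ T := by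
    intro d
    induction d with
    | zero => simpa using h
    | succ d ih =>
      intro k
      have := mul_mem (ih k) (h (k + (d + 1 : ℕ)))
      rwa [← map_mul, single_mul_single_same, one_mul, add_assoc, ← Nat.cast_add_one] at this
  -- `Fin m` arithmetic is cyclic, so `d = l - k - 1` reaches `l` from `k` even when `l = k`
  simpa using hchain (l - k - 1).val k

end Matrix

theorem Submodule.eq_top_of_pi_single_single_mem {R ι : Type*} [CommSemiring R] [Fintype ι]
    [DecidableEq ι] {m : ι → Type*} [∀ i, Fintype (m i)] [∀ i, DecidableEq (m i)]
    (S : Submodule R (∀ i, Matrix (m i) (m i) R))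
    (h : ∀ i (k l : m i), Pi.single i (single k l 1) ∈ S) :
    S = ⊤ := by
  rw [eq_top_iff, ← (Pi.basis fun i => stdBasis R (m i) (m i)).span_eq, Submodule.span_le]
  rintro _ ⟨⟨i, k, l⟩, rfl⟩
  simpa [stdBasis_eq_single] using h i k l

theorem stmt_7_general (p : ℕ) (n : Fin p → ℕ) (hn : ∀ j, 0 < n j) :
    ∃ x : NA n, StarAlgebra.adjoin ℂ ({x} : Set (NA n)) = ⊤ := by
  have : ∀ j, NeZero (n j) := fun j => ⟨(hn j).ne'⟩
  let e := Fintype.equivFin (Σ j, Fin (n j))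
  let c : (Σ j, Fin (n j)) → ℂ := fun i => ((e i : ℕ) + 1 : ℕ)
  let x : NA n := fun j => weightedShift fun k => c ⟨j, k⟩
  refine ⟨x, ?_⟩
  set S := StarAlgebra.adjoin ℂ ({x} : Set (NA n))
  have hx : x ∈ S := StarAlgebra.self_mem_adjoin_singleton ℂ x
  have hc_inj : Function.Injective fun i => c i * star (c i) := by
    intro i i' h
    simp only [c, star_natCast, ← Nat.cast_mul, Nat.cast_inj, Nat.mul_self_inj] at h
    exact e.injective (Fin.val_injective (by omega))
  have hxx : x * star x = piDiagonalAlgHom ℂ fun i => c i * star (c i) :=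
    funext fun j => weightedShift_mul_conjTranspose _
  have hdiag := pi_single_single_mem_of_piDiagonalAlgHom_mem S.toSubalgebra hc_inj
    (hxx ▸ mul_mem hx (star_mem hx) : _ ∈ S)
  have hsucc := pi_single_single_add_one_mem S.toSubalgebra
    (fun j k => Nat.cast_ne_zero.2 (Nat.succ_ne_zero _)) hx hdiag
  have hS : Subalgebra.toSubmodule S.toSubalgebra = ⊤ :=
    Submodule.eq_top_of_pi_single_single_mem _ fun j =>
      map_single_mem_of_forall_map_single_add_one_mem (MulHom.single j : _ →ₙ* NA n) S (hsucc j)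
  exact eq_top_iff.2 fun y _ =>
    (hS ▸ Submodule.mem_top : y ∈ Subalgebra.toSubmodule S.toSubalgebra)

/-- Lemma 5.1: `M_{n_1}(ℂ) ⊕ ⋯ ⊕ M_{n_p}(ℂ)` is singly
generated: there is an element `x` whose generated unital *-subalgebra is all
of `M`. -/
theorem stmt_7 (p : ℕ) (hp : 0 < p) (n : Fin p → ℕ) (hn : ∀ j, 0 < n j) :
    ∃ x : NA n, StarAlgebra.adjoin ℂ ({x} : Set (NA n)) = ⊤ :=
  stmt_7_general p n hn
end

section
/- Let k be a positive integer and let z, p ∈ M_k(ℂ), where p is an orthogonal projection (p = p* = p²) and zz* ≤ ‖z*z‖·p and z*z ≤ ‖z*z‖·p in the Loewner order (i.e. ‖z*z‖p − zz* and ‖z*z‖p − z*z are positive semidefinite). Let e be the orthogonal projection onto the column space of z*z. Then there exists y ∈ M_k(ℂ) satisfying y y* = y* y = p and |y − z|₂ ≤ |p − z*z|₂ + |p − e|₂ ≤ 2·|p − z*z|₂. -/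
/-!
Let `h = z*z`, let `e` be its range projection and `u = z h^{-1/2}` (inverting `h` on its range
only) the partial isometry of the polar decomposition of `z`. The Loewner hypotheses force
`zp = z = pz`, so `u*u = e ≤ p` and `uu* ≤ p`. The projections `p - e` and `p - uu*` have the same
trace, hence are unitarily conjugate, which yields a partial isometry `w` from `p - e` onto
`p - uu*`; then `y = u + w` satisfies `yy* = y*y = p` and `|y - u|₂ = |p - e|₂`.
By functional calculus `(u - z)*(u - z) = e - 2h^{1/2} + h ≤ (e - h)²`, which is the scalar
inequality `1 - 2√t + t ≤ (1 - t)²` for `t > 0`, so `|u - z|₂ ≤ |e - h|₂`. Finally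
`p - h = (e - h) + (p - e)` is an orthogonal decomposition, so `|e - h|₂` and `|p - e|₂` are both
at most `|p - h|₂`.
-/

open Matrix
open scoped ComplexOrder

/-- The normalized trace `tr_k` on `M_k(ℂ)`. -/
noncomputable def trN {k : ℕ} (x : Matrix (Fin k) (Fin k) ℂ) : ℂ :=
  x.trace / (k : ℂ)

/-- The operator norm on `M_k(ℂ)` (acting on Euclidean space). -/
noncomputable def opN {k : ℕ} (x : Matrix (Fin k) (Fin k) ℂ) : ℝ :=
  ‖Matrix.toEuclideanCLM (𝕜 := ℂ) x‖

/-- The normalized Hilbert–Schmidt norm `|z|₂ = (tr_k(z*z))^{1/2}`. -/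
noncomputable def hsN {k : ℕ} (x : Matrix (Fin k) (Fin k) ℂ) : ℝ :=
  Real.sqrt (trN (star x * x)).re

open scoped MatrixOrder

section StarRing

variable {R : Type*} [Ring R] [StarRing R]

lemma star_add_mul_add_of_star_mul_eq_zero {a b : R} (h : star a * b = 0) :
    star (a + b) * (a + b) = star a * a + star b * b := by
  have h' : star b * a = 0 := by simpa using congr(star $h)
  simp only [star_add, add_mul, mul_add, h, h']
  abel

lemma star_sub_mul_sub_eq_add {P e h : R} (he : IsStarProjection e) (hh : IsSelfAdjoint h)
    (heP : e * P = e) (hhP : h * P = h) (hhe : h * e = h) :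
    star (P - h) * (P - h) = star (e - h) * (e - h) + star (P - e) * (P - e) := by
  rw [← sub_add_sub_cancel P e h, add_comm (P - e)]
  refine star_add_mul_add_of_star_mul_eq_zero ?_
  rw [star_sub, he.isSelfAdjoint.star_eq, hh.star_eq, sub_mul, mul_sub, mul_sub, heP,
    he.isIdempotentElem.eq, hhP, hhe, sub_self, sub_self, sub_zero]

end StarRing

lemma one_sub_two_mul_sqrt_add_le (t : ℝ) (ht : 0 ≤ t) : 1 - 2 * √t + t ≤ (1 - t) ^ 2 := by
  obtain ⟨s, hs, rfl⟩ : ∃ s, 0 ≤ s ∧ t = s * s :=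
    ⟨√t, Real.sqrt_nonneg t, (Real.mul_self_sqrt ht).symm⟩
  rw [Real.sqrt_mul_self hs]
  nlinarith [mul_nonneg (mul_self_nonneg (1 - s)) (mul_nonneg hs (by linarith : (0 : ℝ) ≤ 2 + s))]

namespace Matrix

section Range

variable {R : Type*} [CommSemiring R] {n : Type*} [Fintype n]

lemma range_mulVecLin_mul_le (A B : Matrix n n R) :
    LinearMap.range (A * B).mulVecLin ≤ LinearMap.range A.mulVecLin := by
  rw [mulVecLin_mul]
  exact LinearMap.range_comp_le_range _ _

lemma mul_eq_self_of_range_le [DecidableEq n] {e A : Matrix n n R} (he : IsIdempotentElem e)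
    (h : LinearMap.range A.mulVecLin ≤ LinearMap.range e.mulVecLin) : e * A = A := by
  refine ext_of_mulVec_single fun j => ?_
  obtain ⟨v, hv⟩ := h (LinearMap.mem_range_self A.mulVecLin (Pi.single j 1))
  simp only [mulVecLin_apply] at hv
  rw [← mulVec_mulVec, ← hv, mulVec_mulVec, he.eq]

end Range

variable {𝕜 : Type*} [RCLike 𝕜] {n : Type*} [Fintype n] [DecidableEq n]

lemma IsStarProjection.eq_of_range_eq {p q : Matrix n n 𝕜} (hp : IsStarProjection p)
    (hq : IsStarProjection q) (h : LinearMap.range p.mulVecLin = LinearMap.range q.mulVecLin) :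
    p = q := by
  have hqp : q * p = p := mul_eq_self_of_range_le hq.isIdempotentElem h.le
  have hpq : p * q = q := mul_eq_self_of_range_le hp.isIdempotentElem h.ge
  calc p = star (q * p) := by rw [hqp, hp.isSelfAdjoint.star_eq]
    _ = p * q := by rw [star_mul, hp.isSelfAdjoint.star_eq, hq.isSelfAdjoint.star_eq]
    _ = q := hpq

lemma mul_eq_self_of_posSemidef_smul_sub {c : ℝ} {P w : Matrix n n 𝕜} (hP : IsStarProjection P)
    (h : (c • P - star w * w).PosSemidef) : w * P = w := by
  have hconj : star (1 - P) * (c • P - star w * w) * (1 - P)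
      = -(star (w * (1 - P)) * (w * (1 - P))) := by
    have hP' : star (1 - P) = 1 - P := by rw [star_sub, star_one, hP.isSelfAdjoint.star_eq]
    calc star (1 - P) * (c • P - star w * w) * (1 - P)
        = c • ((1 - P) * P * (1 - P)) - star (w * (1 - P)) * (w * (1 - P)) := by
          rw [mul_sub (star (1 - P)), sub_mul, mul_smul_comm, smul_mul_assoc, star_mul, hP']
          simp only [mul_assoc]
      _ = _ := by rw [hP.one_sub_mul_self, zero_mul, smul_zero, zero_sub]
  have hle : star (w * (1 - P)) * (w * (1 - P)) ≤ 0 := by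
    rw [← neg_nonneg, ← hconj, nonneg_iff_posSemidef]
    exact h.conjTranspose_mul_mul_same _
  have hzero : w * (1 - P) = 0 := by
    rw [← conjTranspose_mul_self_eq_zero]
    exact le_antisymm hle (star_mul_self_nonneg _)
  rwa [mul_sub, mul_one, sub_eq_zero, eq_comm] at hzero

lemma mul_star_mul_self_of_isIdempotentElem {u : Matrix n n 𝕜}
    (hu : IsIdempotentElem (star u * u)) : u * (star u * u) = u := by
  set e := star u * u with he
  have hd : star (u - u * e) * (u - u * e) = (1 - e) * (e * (1 - e)) := by
    have hes : star e = e := by simp [he]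
    rw [star_sub, star_mul, hes, he]
    noncomm_ring
  have he0 : e * (1 - e) = 0 := by rw [mul_sub, mul_one, hu.eq, sub_self]
  rw [he0, mul_zero, star_eq_conjTranspose, conjTranspose_mul_self_eq_zero, sub_eq_zero] at hd
  exact hd.symm

section Projection

open Polynomial

lemma IsStarProjection.exists_charpoly_eq {Q : Matrix n n 𝕜} (hQ : IsStarProjection Q) :
    ∃ r : ℕ, Q.trace = r ∧ Q.charpoly = (X - 1) ^ r * X ^ (Fintype.card n - r) := by
  have hH := hQ.isSelfAdjoint.isHermitian
  have heig (i : n) : hH.eigenvalues i = 0 ∨ hH.eigenvalues i = 1 :=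
    hQ.isIdempotentElem.spectrum_subset ℝ (hH.eigenvalues_mem_spectrum_real i)
  have hterm (i : n) : (hH.eigenvalues i : 𝕜) = if hH.eigenvalues i = 1 then 1 else 0 := by
    rcases heig i with h | h <;> simp [h]
  have hfactor (i : n) :
      (X - C (hH.eigenvalues i : 𝕜)) = if hH.eigenvalues i = 1 then X - 1 else X := by
    rcases heig i with h | h <;> simp [h]
  refine ⟨(Finset.univ.filter fun i => hH.eigenvalues i = 1).card, ?_, ?_⟩
  · rw [hH.trace_eq_sum_eigenvalues, Finset.sum_congr rfl fun i _ => hterm i, Finset.sum_boole]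
  · rw [hH.charpoly_eq, Finset.prod_congr rfl fun i _ => hfactor i, Finset.prod_ite,
      Finset.prod_const, Finset.prod_const, ← Finset.card_compl, Finset.compl_filter]

lemma IsStarProjection.exists_unitary_conj_eq_of_trace_eq {Q₁ Q₂ : Matrix n n 𝕜}
    (hQ₁ : IsStarProjection Q₁) (hQ₂ : IsStarProjection Q₂) (htr : Q₁.trace = Q₂.trace) :
    ∃ V ∈ unitaryGroup n 𝕜, V * Q₁ * star V = Q₂ := by
  have hH₁ := hQ₁.isSelfAdjoint.isHermitian
  have hH₂ := hQ₂.isSelfAdjoint.isHermitian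
  obtain ⟨r₁, htr₁, hc₁⟩ := hQ₁.exists_charpoly_eq
  obtain ⟨r₂, htr₂, hc₂⟩ := hQ₂.exists_charpoly_eq
  have hr : r₁ = r₂ := by exact_mod_cast htr₁.symm.trans (htr.trans htr₂)
  have heig : hH₁.eigenvalues = hH₂.eigenvalues := by
    rw [hH₁.eigenvalues_eq_eigenvalues_iff, hc₁, hc₂, hr]
  have hconj : Unitary.conjStarAlgAut 𝕜 _
      (hH₂.eigenvectorUnitary * star hH₁.eigenvectorUnitary) Q₁ = Q₂ := by
    rw [Unitary.conjStarAlgAut_mul_apply, hH₁.conjStarAlgAut_star_eigenvectorUnitary, heig,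
      ← hH₂.spectral_theorem]
  rw [Unitary.conjStarAlgAut_apply] at hconj
  exact ⟨_, SetLike.coe_mem _, hconj⟩

lemma IsStarProjection.exists_partialIsometry_of_trace_eq {Q₁ Q₂ : Matrix n n 𝕜}
    (hQ₁ : IsStarProjection Q₁) (hQ₂ : IsStarProjection Q₂) (htr : Q₁.trace = Q₂.trace) :
    ∃ w : Matrix n n 𝕜, star w * w = Q₁ ∧ w * star w = Q₂ := by
  obtain ⟨V, hVmem, hV⟩ := hQ₁.exists_unitary_conj_eq_of_trace_eq hQ₂ htr
  refine ⟨V * Q₁, ?_, ?_⟩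
  · rw [star_mul, hQ₁.isSelfAdjoint.star_eq, mul_assoc, ← mul_assoc (star V),
      Unitary.star_mul_self_of_mem hVmem, one_mul, hQ₁.isIdempotentElem.eq]
  · rw [← hV, star_mul, hQ₁.isSelfAdjoint.star_eq, mul_assoc, ← mul_assoc Q₁,
      hQ₁.isIdempotentElem.eq, mul_assoc]

lemma exists_unitary_extension_of_partialIsometry {P u : Matrix n n 𝕜}
    (hP : IsStarProjection P) (hu : IsStarProjection (star u * u)) (hPu : P * u = u)
    (huP : u * P = u) :
    ∃ y, y * star y = P ∧ star y * y = P ∧ star (y - u) * (y - u) = P - star u * u := by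
  have hue : u * (star u * u) = u := mul_star_mul_self_of_isIdempotentElem hu.isIdempotentElem
  have hstarPu : star u * P = star u := by
    simpa [hP.isSelfAdjoint.star_eq] using congr(star $hPu)
  have hf : IsStarProjection (u * star u) := by
    refine ⟨?_, by simp [IsSelfAdjoint]⟩
    show u * star u * (u * star u) = u * star u
    rw [← mul_assoc, mul_assoc u, hue]
  have hQ₁ := hu.sub_of_mul_eq_left hP (by rw [mul_assoc, huP])
  have hQ₂ := hf.sub_of_mul_eq_left hP (by rw [mul_assoc, hstarPu])
  obtain ⟨w, hww, hww'⟩ := hQ₁.exists_partialIsometry_of_trace_eq hQ₂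
    (by rw [trace_sub, trace_sub, trace_mul_comm])
  have hwe : w * (P - star u * u) = w :=
    hww ▸ mul_star_mul_self_of_isIdempotentElem (hww ▸ hQ₁.isIdempotentElem)
  have hfw : (P - u * star u) * w = w := by rw [← hww', mul_assoc, hww, hwe]
  have huw : star u * w = 0 := by
    have hstaru : star u * (u * star u) = star u := by
      simpa [mul_assoc] using congr(star $hue)
    rw [← hfw, ← mul_assoc, mul_sub, hstarPu, hstaru, sub_self, zero_mul]
  have huw' : star (star u) * star w = 0 := by
    have hstarw : star w = (P - star u * u) * star w := by
      simpa [hQ₁.isSelfAdjoint.star_eq] using congr(star $hwe).symm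
    rw [star_star, hstarw, ← mul_assoc, mul_sub, huP, hue, sub_self, zero_mul]
  refine ⟨u + w, ?_, ?_, ?_⟩
  · have h := star_add_mul_add_of_star_mul_eq_zero huw'
    simp only [star_star, ← star_add] at h
    rw [h, hww']
    abel
  · rw [star_add_mul_add_of_star_mul_eq_zero huw, hww]
    abel
  · rw [add_sub_cancel_left, hww]

end Projection

section FunctionalCalculus

lemma continuousOn_spectrum (A : Matrix n n 𝕜) (f : ℝ → ℝ) : ContinuousOn f (spectrum ℝ A) :=
  A.finite_real_spectrum.continuousOn f

lemma cfc_mul_cfc (A : Matrix n n 𝕜) (f g : ℝ → ℝ) :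
    cfc f A * cfc g A = cfc (fun t => f t * g t) A :=
  (cfc_mul f g A (A.continuousOn_spectrum f) (A.continuousOn_spectrum g)).symm

lemma cfc_sub_cfc (A : Matrix n n 𝕜) (f g : ℝ → ℝ) :
    cfc f A - cfc g A = cfc (fun t => f t - g t) A :=
  (cfc_sub f g A (A.continuousOn_spectrum f) (A.continuousOn_spectrum g)).symm

lemma cfc_mono_of_le {A : Matrix n n 𝕜} {f g : ℝ → ℝ} (h : ∀ t ∈ spectrum ℝ A, f t ≤ g t) :
    cfc f A ≤ cfc g A :=
  cfc_mono h (A.continuousOn_spectrum f) (A.continuousOn_spectrum g)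

lemma cfc_mul_self (f : ℝ → ℝ) {A : Matrix n n 𝕜} (hA : A.IsHermitian) :
    cfc f A * A = cfc (fun t => f t * t) A := by
  have h := A.cfc_mul_cfc f (fun t => t)
  rwa [cfc_id' ℝ A hA.isSelfAdjoint] at h

lemma self_mul_cfc (f : ℝ → ℝ) {A : Matrix n n 𝕜} (hA : A.IsHermitian) :
    A * cfc f A = cfc (fun t => t * f t) A := by
  have h := A.cfc_mul_cfc (fun t => t) f
  rwa [cfc_id' ℝ A hA.isSelfAdjoint] at h

end FunctionalCalculus

section Polar

noncomputable def supportProj (A : Matrix n n 𝕜) : Matrix n n 𝕜 :=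
  cfc (fun t : ℝ => if t = 0 then 0 else 1) A

lemma isStarProjection_supportProj (A : Matrix n n 𝕜) : IsStarProjection A.supportProj := by
  refine ⟨?_, cfc_predicate _ A⟩
  show supportProj A * supportProj A = supportProj A
  rw [supportProj, cfc_mul_cfc]
  congr with t
  split_ifs <;> simp

lemma supportProj_mul_self {A : Matrix n n 𝕜} (hA : A.IsHermitian) : A.supportProj * A = A := by
  rw [supportProj, cfc_mul_self _ hA]
  conv_rhs => rw [← cfc_id' ℝ A hA.isSelfAdjoint]
  congr with t
  split_ifs with h <;> simp [h]

lemma self_mul_supportProj {A : Matrix n n 𝕜} (hA : A.IsHermitian) : A * A.supportProj = A := by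
  rw [supportProj, self_mul_cfc _ hA]
  conv_rhs => rw [← cfc_id' ℝ A hA.isSelfAdjoint]
  congr with t
  split_ifs with h <;> simp [h]

lemma cfc_inv_mul_self {A : Matrix n n 𝕜} (hA : A.IsHermitian) :
    cfc (fun t : ℝ => t⁻¹) A * A = A.supportProj := by
  rw [supportProj, cfc_mul_self _ hA]
  congr with t
  split_ifs with h <;> simp [h]

lemma self_mul_cfc_inv {A : Matrix n n 𝕜} (hA : A.IsHermitian) :
    A * cfc (fun t : ℝ => t⁻¹) A = A.supportProj := by
  rw [supportProj, self_mul_cfc _ hA]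
  congr with t
  split_ifs with h <;> simp [h]

lemma range_supportProj {A : Matrix n n 𝕜} (hA : A.IsHermitian) :
    LinearMap.range A.supportProj.mulVecLin = LinearMap.range A.mulVecLin := by
  apply le_antisymm
  · rw [← self_mul_cfc_inv hA]
    exact range_mulVecLin_mul_le _ _
  · conv_lhs => rw [← supportProj_mul_self hA]
    exact range_mulVecLin_mul_le _ _

lemma supportProj_mul_of_mul_eq {A P : Matrix n n 𝕜} (hA : A.IsHermitian) (hAP : A * P = A) :
    A.supportProj * P = A.supportProj := by
  rw [← cfc_inv_mul_self hA, mul_assoc, hAP]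

/-- Since `(√0)⁻¹ = 0`, this is `z h^{-1/2}` on the range of `h = z*z` and `0` on its kernel. -/
noncomputable def polarPart (z : Matrix n n 𝕜) : Matrix n n 𝕜 :=
  z * cfc (fun t : ℝ => (√t)⁻¹) (star z * z)

lemma star_polarPart (z : Matrix n n 𝕜) :
    star z.polarPart = cfc (fun t : ℝ => (√t)⁻¹) (star z * z) * star z := by
  rw [polarPart, star_mul, (cfc_predicate _ _ : IsSelfAdjoint _).star_eq]

lemma star_polarPart_mul_self (z : Matrix n n 𝕜) :
    star z.polarPart * z.polarPart = (star z * z).supportProj := by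
  have hh : (star z * z).IsHermitian := IsSelfAdjoint.star_mul_self z
  rw [star_polarPart, polarPart, mul_assoc, ← mul_assoc (star z), self_mul_cfc _ hh, cfc_mul_cfc,
    supportProj]
  refine cfc_congr fun t ht => ?_
  have ht0 : 0 ≤ t := spectrum_nonneg_of_nonneg (star_mul_self_nonneg z) ht
  rcases ht0.eq_or_lt with rfl | htpos
  · simp
  · rw [if_neg htpos.ne', ← div_eq_mul_inv, Real.div_sqrt,
      inv_mul_cancel₀ (Real.sqrt_ne_zero'.mpr htpos)]

lemma star_polarPart_mul (z : Matrix n n 𝕜) :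
    star z.polarPart * z = cfc Real.sqrt (star z * z) := by
  rw [star_polarPart, mul_assoc, cfc_mul_self _ (IsSelfAdjoint.star_mul_self z)]
  simp only [inv_mul_eq_div, Real.div_sqrt]

lemma star_polarPart_sub_mul_le (z : Matrix n n 𝕜) :
    star (z.polarPart - z) * (z.polarPart - z) ≤
      star ((star z * z).supportProj - star z * z) * ((star z * z).supportProj - star z * z) := by
  have hh : (star z * z).IsHermitian := IsSelfAdjoint.star_mul_self z
  have hsqrt : star z * z.polarPart = cfc Real.sqrt (star z * z) := by
    have h := congr(star $(star_polarPart_mul z))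
    rwa [star_mul, star_star, (cfc_predicate _ _ : IsSelfAdjoint _).star_eq] at h
  have hL : star (z.polarPart - z) * (z.polarPart - z) =
      cfc (fun t : ℝ => (if t = 0 then 0 else 1) - √t - (√t - t)) (star z * z) := by
    rw [star_sub, sub_mul, mul_sub, mul_sub, star_polarPart_mul_self, star_polarPart_mul, hsqrt,
      supportProj, ← cfc_sub_cfc, ← cfc_sub_cfc, ← cfc_sub_cfc, cfc_id' ℝ _ hh.isSelfAdjoint]
  have hR : star ((star z * z).supportProj - star z * z) *
        ((star z * z).supportProj - star z * z) =
      cfc (fun t : ℝ => ((if t = 0 then 0 else 1) - t) * ((if t = 0 then 0 else 1) - t))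
        (star z * z) := by
    rw [star_sub, (isStarProjection_supportProj _).isSelfAdjoint.star_eq,
      hh.isSelfAdjoint.star_eq, supportProj, ← cfc_mul_cfc, ← cfc_sub_cfc,
      cfc_id' ℝ _ hh.isSelfAdjoint]
  rw [hL, hR]
  refine cfc_mono_of_le fun t ht => ?_
  have ht0 : 0 ≤ t := spectrum_nonneg_of_nonneg (star_mul_self_nonneg z) ht
  split_ifs with h0
  · simp [h0]
  · linarith [one_sub_two_mul_sqrt_add_le t ht0]

lemma exists_unitary_near_polarPart {z P : Matrix n n 𝕜} (hP : IsStarProjection P)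
    (hzP : z * P = z) (hPz : P * z = z) :
    ∃ y, y * star y = P ∧ star y * y = P ∧
      star (y - z.polarPart) * (y - z.polarPart) =
        star (P - (star z * z).supportProj) * (P - (star z * z).supportProj) := by
  have hh : (star z * z).IsHermitian := IsSelfAdjoint.star_mul_self z
  have heP : (star z * z).supportProj * P = (star z * z).supportProj :=
    supportProj_mul_of_mul_eq hh (by rw [mul_assoc, hzP])
  have hu := star_polarPart_mul_self z
  have hue : z.polarPart * (star z.polarPart * z.polarPart) = z.polarPart :=
    mul_star_mul_self_of_isIdempotentElem (hu ▸ (isStarProjection_supportProj _).isIdempotentElem)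
  have huP : z.polarPart * P = z.polarPart :=
    calc z.polarPart * P = z.polarPart * (star z.polarPart * z.polarPart) * P := by rw [hue]
      _ = z.polarPart := by rw [hu, mul_assoc, heP, ← hu, hue]
  have hPu : P * z.polarPart = z.polarPart := by rw [polarPart, ← mul_assoc, hPz]
  have hQ := (isStarProjection_supportProj (star z * z)).sub_of_mul_eq_left hP heP
  rw [hQ.isSelfAdjoint.star_eq, hQ.isIdempotentElem.eq, ← hu]
  exact exists_unitary_extension_of_partialIsometry hP (hu ▸ isStarProjection_supportProj _)
    hPu huP

end Polar

end Matrix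

section HilbertSchmidt

attribute [local instance] Matrix.frobeniusNormedAddCommGroup

lemma Matrix.frobenius_norm_sq_eq_re_trace {𝕜 m n : Type*} [RCLike 𝕜] [Fintype m] [Fintype n]
    (x : Matrix m n 𝕜) : ‖x‖ ^ 2 = RCLike.re (xᴴ * x).trace := by
  rw [frobenius_norm_def, ← Real.rpow_natCast, ← Real.rpow_mul (by positivity),
    show (1 / 2 : ℝ) * ((2 : ℕ) : ℝ) = 1 by norm_num, Real.rpow_one]
  simp only [Real.rpow_two, trace, diag, mul_apply, conjTranspose_apply, RCLike.star_def,
    RCLike.conj_mul, map_sum]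
  simp_rw [← RCLike.ofReal_pow, RCLike.ofReal_re]
  exact Finset.sum_comm (f := fun i j => ‖x i j‖ ^ 2)

variable {k : ℕ}

lemma hsN_eq_frobenius_norm_div (x : Matrix (Fin k) (Fin k) ℂ) : hsN x = ‖x‖ / √k := by
  have h : (xᴴ * x).trace.re = ‖x‖ ^ 2 := x.frobenius_norm_sq_eq_re_trace.symm
  rw [hsN, trN, Complex.div_natCast_re, star_eq_conjTranspose, h, Real.sqrt_div (sq_nonneg _),
    Real.sqrt_sq (norm_nonneg _)]

lemma hsN_add_le (x y : Matrix (Fin k) (Fin k) ℂ) : hsN (x + y) ≤ hsN x + hsN y := by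
  simp only [hsN_eq_frobenius_norm_div, ← add_div]
  exact div_le_div_of_nonneg_right (norm_add_le x y) (Real.sqrt_nonneg _)

lemma hsN_le_of_star_mul_self_le {x y : Matrix (Fin k) (Fin k) ℂ} (h : star x * x ≤ star y * y) :
    hsN x ≤ hsN y := by
  have htr : (star x * x).trace.re ≤ (star y * y).trace.re := by
    have h' := (Matrix.le_iff.mp h).trace_nonneg
    rw [trace_sub, sub_nonneg] at h'
    exact (Complex.le_def.mp h').1
  simp only [hsN, trN, Complex.div_natCast_re]
  exact Real.sqrt_le_sqrt (div_le_div_of_nonneg_right htr (Nat.cast_nonneg k))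

lemma hsN_le_of_star_mul_self_eq_add {x a b : Matrix (Fin k) (Fin k) ℂ}
    (h : star x * x = star a * a + star b * b) : hsN a ≤ hsN x ∧ hsN b ≤ hsN x :=
  ⟨hsN_le_of_star_mul_self_le (h ▸ le_add_of_nonneg_right (star_mul_self_nonneg b)),
    hsN_le_of_star_mul_self_le (h ▸ le_add_of_nonneg_left (star_mul_self_nonneg a))⟩

end HilbertSchmidt

theorem stmt_8_general (k : ℕ) (z P e : Matrix (Fin k) (Fin k) ℂ)
    (hP : star P = P ∧ P * P = P)
    (h1 : (opN (star z * z) • P - z * star z).PosSemidef)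
    (h2 : (opN (star z * z) • P - star z * z).PosSemidef)
    (he : star e = e ∧ e * e = e ∧
      LinearMap.range (Matrix.mulVecLin e) =
        LinearMap.range (Matrix.mulVecLin (star z * z))) :
    ∃ y : Matrix (Fin k) (Fin k) ℂ,
      y * star y = P ∧ star y * y = P ∧
      hsN (y - z) ≤ hsN (P - star z * z) + hsN (P - e) ∧
      hsN (P - star z * z) + hsN (P - e) ≤ 2 * hsN (P - star z * z) := by
  have hPproj : IsStarProjection P := ⟨hP.2, hP.1⟩
  have hh : (star z * z).IsHermitian := IsSelfAdjoint.star_mul_self z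
  have hzP : z * P = z := mul_eq_self_of_posSemidef_smul_sub hPproj h2
  have hPz : P * z = z := by
    have h := mul_eq_self_of_posSemidef_smul_sub hPproj (w := star z) (by rwa [star_star])
    simpa [hPproj.isSelfAdjoint.star_eq] using congr(star $h)
  obtain rfl : e = (star z * z).supportProj := IsStarProjection.eq_of_range_eq ⟨he.2.1, he.1⟩
    (isStarProjection_supportProj _) (he.2.2.trans (range_supportProj hh).symm)
  obtain ⟨y, hyy, hyy', hyu⟩ := exists_unitary_near_polarPart hPproj hzP hPz
  have hhP : star z * z * P = star z * z := by rw [mul_assoc, hzP]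
  obtain ⟨hEH, hPE⟩ := hsN_le_of_star_mul_self_eq_add <|
    star_sub_mul_sub_eq_add (isStarProjection_supportProj _) hh.isSelfAdjoint
      (supportProj_mul_of_mul_eq hh hhP) hhP (self_mul_supportProj hh)
  have hyu' : hsN (y - z.polarPart) = hsN (P - (star z * z).supportProj) := by
    simp only [hsN, hyu]
  have huz : hsN (z.polarPart - z) ≤ hsN (P - star z * z) :=
    (hsN_le_of_star_mul_self_le (star_polarPart_sub_mul_le z)).trans hEH
  refine ⟨y, hyy, hyy', ?_, by linarith⟩
  calc hsN (y - z) = hsN ((y - z.polarPart) + (z.polarPart - z)) := by rw [sub_add_sub_cancel]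
    _ ≤ hsN (y - z.polarPart) + hsN (z.polarPart - z) := hsN_add_le _ _
    _ ≤ hsN (P - star z * z) + hsN (P - (star z * z).supportProj) := by linarith

/-- Lemma 5.3: if `p` is an orthogonal projection with
`zz* ≤ ‖z*z‖p` and `z*z ≤ ‖z*z‖p` (Loewner order), and `e` is the orthogonal
projection onto the column space of `z*z`, then there is `y` with
`yy* = y*y = p` and `|y − z|₂ ≤ |p − z*z|₂ + |p − e|₂ ≤ 2|p − z*z|₂`. -/
theorem stmt_8 (k : ℕ) (hk : 0 < k) (z P e : Matrix (Fin k) (Fin k) ℂ)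
    (hP : star P = P ∧ P * P = P)
    (h1 : (opN (star z * z) • P - z * star z).PosSemidef)
    (h2 : (opN (star z * z) • P - star z * z).PosSemidef)
    (he : star e = e ∧ e * e = e ∧
      LinearMap.range (Matrix.mulVecLin e) =
        LinearMap.range (Matrix.mulVecLin (star z * z))) :
    ∃ y : Matrix (Fin k) (Fin k) ℂ,
      y * star y = P ∧ star y * y = P ∧
      hsN (y - z) ≤ hsN (P - star z * z) + hsN (P - e) ∧
      hsN (P - star z * z) + hsN (P - e) ≤ 2 * hsN (P - star z * z) :=
  stmt_8_general k z P e hP h1 h2 he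
end

section
/- There exist λ > 0 and r > 0 with the following property. For every k ∈ ℕ, every finite sequence n_1,…,n_p of positive integers, and every unital *-homomorphism π : M_{n_1}(ℂ) ⊕ ⋯ ⊕ M_{n_p}(ℂ) → M_k(ℂ), let H = {v ∈ U_k : v·π(x) = π(x)·v for all x} and let 𝒳 = {x ∈ M_k(ℂ) : x* = −x, and Re Tr(x a*) = 0 for every a ∈ M_k(ℂ) with a* = −a commuting with π(x') for all x'} (the orthogonal complement, with respect to the real inner product Re Tr(x y*), of the skew-Hermitian part of the commutant of π inside the skew-Hermitian matrices). Then for all x, y ∈ 𝒳 with ‖x‖ < r and ‖y‖ < r: inf_{v ∈ H} |exp(x) − exp(y)·v|₂ ≥ λ·|x − y|₂. -/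
open Matrix

/-- Membership in `𝒳`: `x` is skew-Hermitian and orthogonal (w.r.t. the real
inner product `Re Tr(x a*)`) to every skew-Hermitian matrix commuting with the
range of `f`. -/
def memX {k : ℕ} {B : Type*} (f : B → Matrix (Fin k) (Fin k) ℂ)
    (x : Matrix (Fin k) (Fin k) ℂ) : Prop :=
  star x = -x ∧
  ∀ a : Matrix (Fin k) (Fin k) ℂ,
    (star a = -a ∧ ∀ w, a * f w = f w * a) → ((x * star a).trace).re = 0

/-!
Put `a = x - y` and `b = 1 - v`. Writing `2 (1 - v)* = 2 - (v + v*) - (v - v*)*`, the skew-Hermitian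
matrix `v - v*` commutes with `π` and `v + v*` is Hermitian, so `a ⊥ b` for the real inner product
`Re Tr(a b*)`; hence `|a + b|₂ ≥ |a|₂`. Moreover
`exp x - exp y v = (a + b) + (exp x - exp y - a) + (exp y - 1) b`, and since the Hilbert–Schmidt
norm satisfies `|z w|₂ ≤ ‖z‖ |w|₂` and `|z w|₂ ≤ |z|₂ ‖w‖`, the power series give
`|exp x - exp y - a|₂ ≤ |a|₂ / 9` and `|(exp y - 1) b|₂ ≤ |b|₂ / 9` once `‖x‖, ‖y‖ ≤ 1/10`.
Thus `|exp x - exp y v|₂ ≥ (7/9) |a + b|₂ ≥ |a|₂ / 2`, with constants independent of `k` and `π`.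
-/

open NormedSpace

variable {k : ℕ}

section Trace

variable {n : Type*} [Fintype n]

lemma Matrix.re_trace_star (a : Matrix n n ℂ) : (star a).trace.re = a.trace.re := by
  rw [star_eq_conjTranspose, trace_conjTranspose, Complex.star_def, Complex.conj_re]

lemma Matrix.re_trace_eq_zero_of_star_eq_neg {a : Matrix n n ℂ} (ha : star a = -a) :
    a.trace.re = 0 := by
  have h := a.re_trace_star
  rw [ha, trace_neg, Complex.neg_re] at h
  linarith

lemma Matrix.re_trace_mul_eq_zero_of_skew_of_herm {a h : Matrix n n ℂ} (ha : star a = -a)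
    (hh : star h = h) : (a * h).trace.re = 0 := by
  have key := (a * h).re_trace_star
  rw [star_mul, ha, hh, mul_neg, trace_neg, trace_mul_comm, Complex.neg_re] at key
  linarith

lemma Matrix.re_trace_mul_star_comm (a b : Matrix n n ℂ) :
    (a * star b).trace.re = (b * star a).trace.re := by
  rw [← (a * star b).re_trace_star, star_mul, star_star]

end Trace

lemma memX.re_trace_sub_mul_star_one_sub_eq_zero {B : Type*} [Star B]
    {f : B → Matrix (Fin k) (Fin k) ℂ} (hf : ∀ w, f (star w) = star (f w))
    {x y v : Matrix (Fin k) (Fin k) ℂ} (hx : memX f x) (hy : memX f y)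
    (hv : ∀ w, v * f w = f w * v) :
    ((x - y) * star (1 - v)).trace.re = 0 := by
  have hv' : ∀ w, star v * f w = f w * star v := fun w => by
    simpa [star_mul, hf] using (congrArg star (hv (star w))).symm
  set a := v - star v
  have ha : star a = -a := by simp [a]
  have hxa := hx.2 a ⟨ha, fun w => by simp only [a, sub_mul, mul_sub, hv, hv']⟩
  have hya := hy.2 a ⟨ha, fun w => by simp only [a, sub_mul, mul_sub, hv, hv']⟩
  have hxy : star (x - y) = -(x - y) := by rw [star_sub, hx.1, hy.1]; abel
  have hherm : star (v + star v) = v + star v := by rw [star_add, star_star, add_comm]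
  have split : (x - y) * star (1 - v) + (x - y) * star (1 - v) =
      (x - y) + (x - y) - (x - y) * (v + star v) - (x * star a - y * star a) := by
    simp only [a, star_sub, star_one, star_star]; noncomm_ring
  have htr := Matrix.re_trace_eq_zero_of_star_eq_neg hxy
  have h := congrArg (fun m => m.trace.re) split
  simp only [Matrix.trace_add, Matrix.trace_sub, Complex.add_re, Complex.sub_re, hxa, hya,
    Matrix.re_trace_mul_eq_zero_of_skew_of_herm hxy hherm] at h htr
  linarith

section OpNorm

open scoped Matrix.Norms.L2Operator

lemma opN_conjTranspose (a : Matrix (Fin k) (Fin k) ℂ) : opN aᴴ = opN a :=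
  Matrix.l2_opNorm_conjTranspose a

lemma opN_mul_le (a b : Matrix (Fin k) (Fin k) ℂ) : opN (a * b) ≤ opN a * opN b :=
  Matrix.l2_opNorm_mul a b

lemma opN_pow_le (a : Matrix (Fin k) (Fin k) ℂ) (m : ℕ) : opN (a ^ m) ≤ opN a ^ m := by
  induction m with
  | zero =>
    rw [pow_zero, pow_zero, opN, map_one]
    exact ContinuousLinearMap.norm_id_le
  | succ m ih =>
    calc opN (a ^ (m + 1)) ≤ opN (a ^ m) * opN a := pow_succ a m ▸ opN_mul_le _ _
      _ ≤ opN a ^ m * opN a := by gcongr; exact norm_nonneg _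
      _ = opN a ^ (m + 1) := (pow_succ _ _).symm

end OpNorm

section Series

variable {E : Type*} [SeminormedAddCommGroup E]

lemma norm_tsum_le_of_le_geometric {f : ℕ → E} {c r : ℝ} (hr₀ : 0 ≤ r) (hr₁ : r < 1)
    (hf : ∀ m, ‖f m‖ ≤ c * r ^ (m + 1)) : ‖∑' m, f m‖ ≤ c * (r / (1 - r)) := by
  refine tsum_of_norm_bounded ?_ hf
  simpa only [pow_succ', mul_assoc, div_eq_mul_inv]
    using (hasSum_geometric_of_lt_one hr₀ hr₁).mul_left (c * r)

lemma norm_inv_factorial_smul_le [NormedSpace ℂ E] (m : ℕ) (z : E) :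
    ‖(((m + 1).factorial : ℂ))⁻¹ • z‖ ≤ ‖z‖ / (m + 1) := by
  rw [norm_smul, norm_inv, Complex.norm_natCast, inv_mul_eq_div]
  gcongr
  exact_mod_cast Nat.self_le_factorial _

end Series

section Frobenius

attribute [local instance] Matrix.frobeniusNormedAddCommGroup Matrix.frobeniusNormedSpace
  Matrix.frobeniusNormedRing Matrix.frobeniusNormedAlgebra

lemma Matrix.frobenius_norm_sq_eq_sum {m n : Type*} [Fintype m] [Fintype n]
    (a : Matrix m n ℂ) : ‖a‖ ^ 2 = ∑ i, ∑ j, ‖a i j‖ ^ 2 := by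
  rw [frobenius_norm_def, ← Real.rpow_natCast, ← Real.rpow_mul (by positivity)]
  norm_num

lemma Matrix.frobenius_norm_sq_eq_re_trace_s12 {n : Type*} [Fintype n] (a : Matrix n n ℂ) :
    ‖a‖ ^ 2 = (a * star a).trace.re := by
  simp [frobenius_norm_sq_eq_sum, trace, mul_apply, star_eq_conjTranspose, Complex.mul_conj',
    Complex.re_sum, ← Complex.ofReal_pow]

lemma Matrix.frobenius_norm_add_sq_of_re_trace_eq_zero {n : Type*} [Fintype n]
    {a b : Matrix n n ℂ} (h : (a * star b).trace.re = 0) :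
    ‖a + b‖ ^ 2 = ‖a‖ ^ 2 + ‖b‖ ^ 2 := by
  have h' : (b * star a).trace.re = 0 := (re_trace_mul_star_comm b a).trans h
  have expand : (a + b) * star (a + b) = a * star a + a * star b + b * star a + b * star b := by
    rw [star_add]; noncomm_ring
  simp only [frobenius_norm_sq_eq_re_trace_s12, expand, trace_add, Complex.add_re, h, h', add_zero]

lemma frobenius_norm_mul_le_opN_mul (a b : Matrix (Fin k) (Fin k) ℂ) :
    ‖a * b‖ ≤ opN a * ‖b‖ := by
  have hcol : ∀ j, ∑ i, ‖(a * b) i j‖ ^ 2 ≤ opN a ^ 2 * ∑ i, ‖b i j‖ ^ 2 := fun j => by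
    have h := pow_le_pow_left₀ (norm_nonneg _)
      ((Matrix.toEuclideanCLM (𝕜 := ℂ) a).le_opNorm (WithLp.toLp 2 fun i => b i j)) 2
    simpa [opN, EuclideanSpace.norm_sq_eq, mul_pow, Matrix.mul_apply, Matrix.mulVec, dotProduct]
      using h
  refine le_of_pow_le_pow_left₀ two_ne_zero (by unfold opN; positivity) ?_
  calc ‖a * b‖ ^ 2 = ∑ j, ∑ i, ‖(a * b) i j‖ ^ 2 := by
        rw [Matrix.frobenius_norm_sq_eq_sum, Finset.sum_comm]
    _ ≤ ∑ j, opN a ^ 2 * ∑ i, ‖b i j‖ ^ 2 := Finset.sum_le_sum fun j _ => hcol j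
    _ = (opN a * ‖b‖) ^ 2 := by
        rw [← Finset.mul_sum, mul_pow, Matrix.frobenius_norm_sq_eq_sum b, Finset.sum_comm]

lemma frobenius_norm_mul_le_mul_opN (a b : Matrix (Fin k) (Fin k) ℂ) :
    ‖a * b‖ ≤ ‖a‖ * opN b := by
  calc ‖a * b‖ = ‖bᴴ * aᴴ‖ := by
        rw [← Matrix.conjTranspose_mul, Matrix.frobenius_norm_conjTranspose]
    _ ≤ opN bᴴ * ‖aᴴ‖ := frobenius_norm_mul_le_opN_mul _ _
    _ = ‖a‖ * opN b := by rw [opN_conjTranspose, Matrix.frobenius_norm_conjTranspose, mul_comm]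

lemma frobenius_norm_pow_sub_pow_le {x y : Matrix (Fin k) (Fin k) ℂ} {R : ℝ}
    (hx : opN x ≤ R) (hy : opN y ≤ R) (m : ℕ) :
    ‖x ^ (m + 1) - y ^ (m + 1)‖ ≤ (m + 1) * R ^ m * ‖x - y‖ := by
  have hR : 0 ≤ R := (norm_nonneg _).trans hx
  induction m with
  | zero => simp
  | succ m ih =>
    have split : x ^ (m + 2) - y ^ (m + 2) =
        x * (x ^ (m + 1) - y ^ (m + 1)) + (x - y) * y ^ (m + 1) := by
      rw [pow_succ' x, pow_succ' y]; noncomm_ring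
    have hyp : opN (y ^ (m + 1)) ≤ R ^ (m + 1) :=
      (opN_pow_le y _).trans (pow_le_pow_left₀ (norm_nonneg _) hy _)
    calc ‖x ^ (m + 2) - y ^ (m + 2)‖
        ≤ opN x * ‖x ^ (m + 1) - y ^ (m + 1)‖ + ‖x - y‖ * opN (y ^ (m + 1)) := by
          rw [split]
          exact (norm_add_le _ _).trans (add_le_add (frobenius_norm_mul_le_opN_mul _ _)
            (frobenius_norm_mul_le_mul_opN _ _))
      _ ≤ R * ((m + 1) * R ^ m * ‖x - y‖) + ‖x - y‖ * R ^ (m + 1) := by gcongr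
      _ = (↑(m + 1) + 1) * R ^ (m + 1) * ‖x - y‖ := by push_cast; ring

lemma frobenius_norm_exp_sub_exp_sub_sub_le {x y : Matrix (Fin k) (Fin k) ℂ} {R : ℝ}
    (hR : R < 1) (hx : opN x ≤ R) (hy : opN y ≤ R) :
    ‖exp x - exp y - (x - y)‖ ≤ ‖x - y‖ * (R / (1 - R)) := by
  set d : ℕ → Matrix (Fin k) (Fin k) ℂ := fun m => ((m.factorial : ℂ))⁻¹ • (x ^ m - y ^ m)
  have hd : HasSum d (exp x - exp y) := by
    simp only [d, smul_sub]
    exact (exp_series_hasSum_exp' (𝕂 := ℂ) x).sub (exp_series_hasSum_exp' (𝕂 := ℂ) y)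
  have tail : exp x - exp y - (x - y) = ∑' m, d (m + 2) := by
    rw [← hd.tsum_eq, ← hd.summable.sum_add_tsum_nat_add 2]
    simp [d, Finset.sum_range_succ]
  rw [tail]
  refine norm_tsum_le_of_le_geometric ((norm_nonneg _).trans hx) hR fun m => ?_
  calc ‖d (m + 2)‖ ≤ ‖x ^ (m + 2) - y ^ (m + 2)‖ / (m + 2) := by
        simpa [d, add_assoc, one_add_one_eq_two]
          using norm_inv_factorial_smul_le (m + 1) (x ^ (m + 2) - y ^ (m + 2))
    _ ≤ (m + 2) * R ^ (m + 1) * ‖x - y‖ / (m + 2) := by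
        gcongr
        exact_mod_cast frobenius_norm_pow_sub_pow_le hx hy (m + 1)
    _ = ‖x - y‖ * R ^ (m + 1) := by field_simp

lemma frobenius_norm_exp_sub_one_mul_le {y : Matrix (Fin k) (Fin k) ℂ} {R : ℝ}
    (hR : R < 1) (hy : opN y ≤ R) (b : Matrix (Fin k) (Fin k) ℂ) :
    ‖(exp y - 1) * b‖ ≤ ‖b‖ * (R / (1 - R)) := by
  set d : ℕ → Matrix (Fin k) (Fin k) ℂ := fun m => ((m.factorial : ℂ))⁻¹ • (y ^ m * b)
  have hd : HasSum d (exp y * b) := by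
    simp only [d, ← smul_mul_assoc]
    exact (exp_series_hasSum_exp' (𝕂 := ℂ) y).mul_right b
  have tail : (exp y - 1) * b = ∑' m, d (m + 1) := by
    rw [sub_mul, one_mul, ← hd.tsum_eq, hd.summable.tsum_eq_zero_add]
    simp [d]
  rw [tail]
  have hR₀ : 0 ≤ R := (norm_nonneg _).trans hy
  refine norm_tsum_le_of_le_geometric hR₀ hR fun m => ?_
  calc ‖d (m + 1)‖ ≤ ‖y ^ (m + 1) * b‖ / (m + 1) := norm_inv_factorial_smul_le m _
    _ ≤ ‖y ^ (m + 1) * b‖ := div_le_self (norm_nonneg _) (by linarith [m.cast_nonneg (α := ℝ)])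
    _ ≤ opN (y ^ (m + 1)) * ‖b‖ := frobenius_norm_mul_le_opN_mul _ _
    _ ≤ ‖b‖ * R ^ (m + 1) := by
        rw [mul_comm]
        gcongr
        exact (opN_pow_le y _).trans (pow_le_pow_left₀ (norm_nonneg _) hy _)

lemma hsN_eq_frobenius_norm_div_sqrt (a : Matrix (Fin k) (Fin k) ℂ) : hsN a = ‖a‖ / √k := by
  rw [hsN, trN, Matrix.trace_mul_comm, Complex.div_natCast_re,
    ← Matrix.frobenius_norm_sq_eq_re_trace_s12, Real.sqrt_div (sq_nonneg _),
    Real.sqrt_sq (norm_nonneg _)]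

variable {B : Type*} [Star B] {f : B → Matrix (Fin k) (Fin k) ℂ}

lemma frobenius_norm_sub_le_two_mul_norm_exp_sub_exp_mul (hf : ∀ w, f (star w) = star (f w))
    {x y v : Matrix (Fin k) (Fin k) ℂ} (hx : memX f x) (hy : memX f y)
    (hxr : opN x ≤ 1 / 10) (hyr : opN y ≤ 1 / 10) (hv : ∀ w, v * f w = f w * v) :
    ‖x - y‖ ≤ 2 * ‖exp x - exp y * v‖ := by
  set a := x - y
  set b := 1 - v
  have pythagoras : ‖a + b‖ ^ 2 = ‖a‖ ^ 2 + ‖b‖ ^ 2 :=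
    Matrix.frobenius_norm_add_sq_of_re_trace_eq_zero
      (hx.re_trace_sub_mul_star_one_sub_eq_zero hf hy hv)
  have ha : ‖a‖ ≤ ‖a + b‖ := le_of_pow_le_pow_left₀ two_ne_zero (norm_nonneg _) (by
    rw [pythagoras]; exact le_add_of_nonneg_right (sq_nonneg _))
  have hb : ‖b‖ ≤ ‖a + b‖ := le_of_pow_le_pow_left₀ two_ne_zero (norm_nonneg _) (by
    rw [pythagoras]; exact le_add_of_nonneg_left (sq_nonneg _))
  have hexp : ‖exp x - exp y - a‖ ≤ ‖a‖ * (1 / 9) :=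
    (frobenius_norm_exp_sub_exp_sub_sub_le (by norm_num) hxr hyr).trans_eq (by norm_num [a])
  have hexp_one : ‖(exp y - 1) * b‖ ≤ ‖b‖ * (1 / 9) :=
    (frobenius_norm_exp_sub_one_mul_le (by norm_num) hyr b).trans_eq (by norm_num)
  have decomp : a + b = (exp x - exp y * v) - (exp x - exp y - a) - (exp y - 1) * b := by
    simp only [a, b]; noncomm_ring
  have htri : ‖a + b‖ ≤ ‖exp x - exp y * v‖ + ‖exp x - exp y - a‖ + ‖(exp y - 1) * b‖ := by
    rw [decomp]
    exact (norm_sub_le _ _).trans (by gcongr; exact norm_sub_le _ _)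
  linarith [norm_nonneg (exp x - exp y * v)]

lemma hsN_sub_le_two_mul_hsN_exp_sub_exp_mul (hf : ∀ w, f (star w) = star (f w))
    {x y v : Matrix (Fin k) (Fin k) ℂ} (hx : memX f x) (hy : memX f y)
    (hxr : opN x ≤ 1 / 10) (hyr : opN y ≤ 1 / 10) (hv : ∀ w, v * f w = f w * v) :
    hsN (x - y) ≤ 2 * hsN (exp x - exp y * v) := by
  rw [hsN_eq_frobenius_norm_div_sqrt, hsN_eq_frobenius_norm_div_sqrt, ← mul_div_assoc]
  gcongr
  exact frobenius_norm_sub_le_two_mul_norm_exp_sub_exp_mul hf hx hy hxr hyr hv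

end Frobenius

/-- Lemma 8.2: there are uniform constants `λ, r > 0` such
that for any unital *-homomorphism `π : M_{n_1}(ℂ) ⊕ ⋯ ⊕ M_{n_p}(ℂ) → M_k(ℂ)`
with commutant unitary group `H`, and all `x, y` in the orthogonal complement
`𝒳` of the Lie algebra of `H` with `‖x‖, ‖y‖ < r`, one has
`inf_{v ∈ H} |exp(x) − exp(y)v|₂ ≥ λ|x − y|₂`. -/
theorem stmt_12 :
    ∃ lam > (0 : ℝ), ∃ r > (0 : ℝ),
      ∀ (k p : ℕ) (n : Fin p → ℕ) (π : NA n →⋆ₐ[ℂ] Matrix (Fin k) (Fin k) ℂ),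
        ∀ x y : Matrix (Fin k) (Fin k) ℂ,
          memX (⇑π) x → memX (⇑π) y → opN x < r → opN y < r →
            ∀ v ∈ Matrix.unitaryGroup (Fin k) ℂ,
              (∀ w : NA n, v * π w = π w * v) →
                lam * hsN (x - y) ≤
                  hsN (NormedSpace.exp x - NormedSpace.exp y * v) := by
  refine ⟨1 / 2, by norm_num, 1 / 10, by norm_num, fun k p n π x y hx hy hxr hyr v _ hv => ?_⟩
  linarith [hsN_sub_le_two_mul_hsN_exp_sub_exp_mul (map_star π) hx hy hxr.le hyr.le hv]
end

section
/- Let V be a finite-dimensional real inner product space equipped additionally with a norm N, and let V = H ⊕ X be an orthogonal direct sum decomposition. Suppose the orthogonal projection P of V onto H satisfies N(P v) ≤ N(v) for all v ∈ V. Then vol_V({v ∈ V : N(v) ≤ 1}) ≤ vol_H({h ∈ H : N(h) ≤ 1}) · vol_X({x ∈ X : N(x) ≤ 2}), where vol_V, vol_H, vol_X denote the Lebesgue measures induced by the respective inner products on V, H and X. -/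
open MeasureTheory

/-!
The map `v ↦ (P v, v - P v)` from `V` onto `H × Hᗮ` is volume preserving, and it sends the
`N`-unit ball into the product of the `N`-unit ball of `H` with the `N`-ball of radius `2` of `Hᗮ`,
because `N (v - P v) ≤ N v + N (P v) ≤ 2 N v`.
-/

theorem LinearIsometryEquiv.volume_image {E F : Type*}
    [NormedAddCommGroup E] [InnerProductSpace ℝ E] [FiniteDimensional ℝ E]
    [MeasurableSpace E] [BorelSpace E]
    [NormedAddCommGroup F] [InnerProductSpace ℝ F] [FiniteDimensional ℝ F]
    [MeasurableSpace F] [BorelSpace F]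
    (f : E ≃ₗᵢ[ℝ] F) (s : Set E) : volume (f '' s) = volume s := by
  rw [f.image_eq_preimage_symm]
  exact f.symm.measurePreserving.measure_preimage_emb
    f.symm.toHomeomorph.measurableEmbedding s

namespace Submodule

variable {E : Type*} [NormedAddCommGroup E] [InnerProductSpace ℝ E] [FiniteDimensional ℝ E]
  [MeasurableSpace E] [BorelSpace E] (K : Submodule ℝ E)

theorem measurePreserving_orthogonalProjectionOnto_prod :
    MeasurePreserving (fun v ↦ (K.orthogonalProjectionOnto v, Kᗮ.orthogonalProjectionOnto v))
      volume volume := by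
  have := (WithLp.volume_preserving_ofLp K Kᗮ).comp K.orthogonalDecomposition.measurePreserving
  simpa only [Function.comp_def, orthogonalDecomposition_apply, Measure.volume_eq_prod]
    using this

theorem volume_le_mul_of_forall_orthogonalProjectionOnto_mem {s : Set E} {a : Set K}
    {b : Set Kᗮ}
    (h : ∀ v ∈ s, K.orthogonalProjectionOnto v ∈ a ∧ Kᗮ.orthogonalProjectionOnto v ∈ b) :
    volume s ≤ volume a * volume b :=
  calc volume s
      ≤ volume ((fun v ↦ (K.orthogonalProjectionOnto v, Kᗮ.orthogonalProjectionOnto v)) ⁻¹'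
          a ×ˢ b) := measure_mono h
    _ ≤ volume (a ×ˢ b) :=
        K.measurePreserving_orthogonalProjectionOnto_prod.measure_preimage_le _
    _ = volume a * volume b := Measure.volume_eq_prod K Kᗮ ▸ Measure.prod_prod a b

end Submodule

theorem map_sub_le_add_of_abs_smul {E : Type*} [AddCommGroup E] [Module ℝ E] (N : E → ℝ)
    (hNsmul : ∀ (r : ℝ) (v : E), N (r • v) = |r| * N v)
    (hNadd : ∀ v w : E, N (v + w) ≤ N v + N w) (v w : E) :
    N (v - w) ≤ N v + N w := by
  have hneg : N (-w) = N w := by simpa using hNsmul (-1) w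
  simpa [sub_eq_add_neg, hneg] using hNadd v (-w)

theorem stmt_14_general (V : Type*) [NormedAddCommGroup V] [InnerProductSpace ℝ V]
    [FiniteDimensional ℝ V]
    (N : V → ℝ)
    (hNsmul : ∀ (r : ℝ) (v : V), N (r • v) = |r| * N v)
    (hNadd : ∀ v w : V, N (v + w) ≤ N v + N w)
    (H : Submodule ℝ V)
    (hP : ∀ v : V, N ((H.orthogonalProjectionOnto v : V)) ≤ N v)
    (dV dH dX : ℕ)
    (eV : V ≃ₗᵢ[ℝ] EuclideanSpace ℝ (Fin dV))
    (eH : H ≃ₗᵢ[ℝ] EuclideanSpace ℝ (Fin dH))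
    (eX : Hᗮ ≃ₗᵢ[ℝ] EuclideanSpace ℝ (Fin dX)) :
    volume (eV '' {v : V | N v ≤ 1}) ≤
      volume (eH '' {h : H | N (h : V) ≤ 1}) *
        volume (eX '' {x : Hᗮ | N (x : V) ≤ 2}) := by
  borelize V
  rw [eV.volume_image, eH.volume_image, eX.volume_image]
  refine H.volume_le_mul_of_forall_orthogonalProjectionOnto_mem fun v (hv : N v ≤ 1) ↦
    ⟨(hP v).trans hv, ?_⟩
  change N (Hᗮ.orthogonalProjectionOnto v : V) ≤ 2
  rw [← Submodule.starProjection_apply, Submodule.starProjection_orthogonal_val]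
  linarith [map_sub_le_add_of_abs_smul N hNsmul hNadd v (H.starProjection v),
    show N (H.starProjection v) ≤ N v from hP v]

/-- volume comparison from the Addendum: if `V = H ⊕ Hᗮ`
is an orthogonal decomposition of a finite-dimensional real inner product
space and the orthogonal projection onto `H` is a contraction for an
additional norm `N`, then the `N`-unit ball of `V` has volume at most the
product of the volume of the `N`-unit ball of `H` and the volume of the
`N`-ball of radius `2` in `Hᗮ`, the volumes being the Lebesgue measures
induced by the inner products (expressed here via arbitrary linear isometries
onto Euclidean spaces). -/
theorem stmt_14 (V : Type*) [NormedAddCommGroup V] [InnerProductSpace ℝ V]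
    [FiniteDimensional ℝ V]
    (N : V → ℝ)
    (hN0 : ∀ v, N v = 0 ↔ v = 0)
    (hNsmul : ∀ (r : ℝ) (v : V), N (r • v) = |r| * N v)
    (hNadd : ∀ v w : V, N (v + w) ≤ N v + N w)
    (H : Submodule ℝ V)
    (hP : ∀ v : V, N ((H.orthogonalProjectionOnto v : V)) ≤ N v)
    (dV dH dX : ℕ)
    (eV : V ≃ₗᵢ[ℝ] EuclideanSpace ℝ (Fin dV))
    (eH : H ≃ₗᵢ[ℝ] EuclideanSpace ℝ (Fin dH))
    (eX : Hᗮ ≃ₗᵢ[ℝ] EuclideanSpace ℝ (Fin dX)) :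
    volume (eV '' {v : V | N v ≤ 1}) ≤
      volume (eH '' {h : H | N (h : V) ≤ 1}) *
        volume (eX '' {x : Hᗮ | N (x : V) ≤ 2}) :=
  stmt_14_general V N hNsmul hNadd H hP dV dH dX eV eH eX
end

section
/- Let d be a positive integer and let 0 ≤ β_1 < β_2 < ⋯ < β_d ≤ 1/6. Define h : ℝ → ℝ by h(t) = (t − β_1)(t − β_2)⋯(t − β_d). Then: (a) for all s, t ∈ [0,2] with t ≤ 2β_d and h(s) = h(t), one has s ≤ 3β_d; and (b) for all s, t ∈ [0,2] with t > 2β_d and h(s) = h(t), one has s > β_d. -/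
private lemma abs_prod_le {d : ℕ} (c : ℝ) (f : Fin d → ℝ)
    (hf : ∀ j, |f j| ≤ c) : |∏ j, f j| ≤ c ^ d := by
  rw [Finset.abs_prod]
  calc ∏ j, |f j| ≤ ∏ _j : Fin d, c :=
        Finset.prod_le_prod (fun j _ => abs_nonneg _) (fun j _ => hf j)
    _ = c ^ d := by simp

private lemma pow_lt_prod {d : ℕ} (hd : 0 < d) (c : ℝ) (hc : 0 ≤ c)
    (f : Fin d → ℝ) (hf : ∀ j, c < f j) : c ^ d < ∏ j, f j := by
  rcases hc.eq_or_lt with rfl | hc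
  · rw [zero_pow hd.ne']
    exact Finset.prod_pos (fun j _ => hf j)
  · calc c ^ d = ∏ _j : Fin d, c := by simp
      _ < ∏ j, f j := Finset.prod_lt_prod_of_nonempty (fun j _ => hc) (fun j _ => hf j)
          (by simp [Finset.univ_nonempty_iff, Fin.pos_iff_nonempty.mp hd])

/-- preimage localization, Section 6.1: for
`h(t) = (t−β_1)⋯(t−β_d)` with `0 ≤ β_1 < ⋯ < β_d ≤ 1/6`:
(a) if `s, t ∈ [0,2]`, `t ≤ 2β_d` and `h(s) = h(t)` then `s ≤ 3β_d`;
(b) if `s, t ∈ [0,2]`, `t > 2β_d` and `h(s) = h(t)` then `s > β_d`. -/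
theorem stmt_16 (d : ℕ) (hd : 0 < d) (β : Fin d → ℝ)
    (hmono : StrictMono β) (h0 : ∀ j, 0 ≤ β j) (h16 : ∀ j, β j ≤ 1 / 6) :
    (∀ s t : ℝ, s ∈ Set.Icc (0 : ℝ) 2 → t ∈ Set.Icc (0 : ℝ) 2 →
      t ≤ 2 * β ⟨d - 1, by omega⟩ →
      (∏ j, (s - β j)) = (∏ j, (t - β j)) → s ≤ 3 * β ⟨d - 1, by omega⟩) ∧
    (∀ s t : ℝ, s ∈ Set.Icc (0 : ℝ) 2 → t ∈ Set.Icc (0 : ℝ) 2 →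
      2 * β ⟨d - 1, by omega⟩ < t →
      (∏ j, (s - β j)) = (∏ j, (t - β j)) → β ⟨d - 1, by omega⟩ < s) := by
  set B := β ⟨d - 1, by omega⟩ with hB
  have hβB : ∀ j, β j ≤ B := fun j =>
    hmono.monotone (by simp [Fin.le_def]; omega)
  have hB0 : 0 ≤ B := h0 _
  constructor
  · intro s t hs ht ht2 heq
    by_contra hcon
    push_neg at hcon
    have h1 : |∏ j, (t - β j)| ≤ (2 * B) ^ d := by
      refine abs_prod_le _ _ (fun j => abs_le.mpr ⟨?_, ?_⟩)
      · have := h0 j; have := hβB j; nlinarith [ht.1]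
      · have := h0 j; linarith
    have h2 : (2 * B) ^ d < ∏ j, (s - β j) := by
      refine pow_lt_prod hd _ (by linarith) _ (fun j => ?_)
      have := hβB j; linarith
    rw [heq] at h2
    exact absurd (le_abs_self _) (not_le.mpr (lt_of_le_of_lt h1 h2))
  · intro s t hs ht ht2 heq
    by_contra hcon
    push_neg at hcon
    have h1 : |∏ j, (s - β j)| ≤ B ^ d := by
      refine abs_prod_le _ _ (fun j => abs_le.mpr ⟨?_, ?_⟩)
      · have := hβB j; linarith [hs.1]
      · have := h0 j; linarith
    have h2 : B ^ d < ∏ j, (t - β j) := by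
      refine pow_lt_prod hd _ hB0 _ (fun j => ?_)
      have := hβB j; linarith
    rw [← heq] at h2
    exact absurd (le_abs_self _) (not_le.mpr (lt_of_le_of_lt h1 h2))
end
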